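/- Let F be a distribution supported on a compact interval [0, m] with m > 0 and F(x) < 1 for all x < m, let Mₖ be the maximum of k i.i.d. draws from F, and γ(F,n) = n·(E[Mₙ₋₁]/E[Mₙ] − (n−1)/n). Then γ(F,n) → 1 as n → ∞. -/

import Mathlib

/-!
Write `F` for the distribution function of the values and `g k = E[Mₖ]`. By the layer-cake
formula and independence, `g k = ∫₀^c (1 - F^k)`, and `γ(F,n) = 1 + n (g (n-1) - g n) / g n`.
As `F < 1` on `[0, c)`, dominated convergence gives `g n → c > 0` and
`n (g n - g (n-1)) = ∫₀^c n F^(n-1) (1 - F) → 0`: comparing with the geometric sum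
`∑_{i<n} F^i (1 - F) = 1 - F^n` bounds the integrand by `1`, and it tends to `0` pointwise.
-/

open MeasureTheory ProbabilityTheory Set Filter Topology

lemma natCast_succ_mul_pow_mul_one_sub_le_one {r : ℝ} (h0 : 0 ≤ r) (h1 : r ≤ 1) (n : ℕ) :
    (n + 1) * r ^ n * (1 - r) ≤ 1 := by
  calc ((n : ℝ) + 1) * r ^ n * (1 - r)
      = ∑ _i ∈ Finset.range (n + 1), r ^ n * (1 - r) := by simp [mul_assoc]
    _ ≤ ∑ i ∈ Finset.range (n + 1), r ^ i * (1 - r) := Finset.sum_le_sum fun i hi =>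
        mul_le_mul_of_nonneg_right (pow_le_pow_of_le_one h0 h1 (Finset.mem_range_succ_iff.1 hi))
          (sub_nonneg.2 h1)
    _ = 1 - r ^ (n + 1) := by rw [← Finset.sum_mul, geom_sum_mul_neg]
    _ ≤ 1 := by linarith [pow_nonneg h0 (n + 1)]

lemma tendsto_natCast_succ_mul_pow_mul_one_sub {r : ℝ} (h0 : 0 ≤ r) (h1 : r < 1) :
    Tendsto (fun n : ℕ => (n + 1) * r ^ n * (1 - r)) atTop (𝓝 0) := by
  simpa [add_mul] using ((tendsto_self_mul_const_pow_of_lt_one h0 h1).add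
    (tendsto_pow_atTop_nhds_zero_of_lt_one h0 h1)).mul_const (1 - r)

lemma abs_one_sub_pow_le_one {r : ℝ} (h0 : 0 ≤ r) (h1 : r ≤ 1) (n : ℕ) : |1 - r ^ n| ≤ 1 :=
  abs_sub_le_of_nonneg_of_le zero_le_one le_rfl (pow_nonneg h0 n) (pow_le_one₀ h0 h1)

section IntegralsOfPowers

variable {α : Type*} [MeasurableSpace α] {μ : Measure α} [IsFiniteMeasure μ] {F : α → ℝ}

lemma integrable_one_sub_pow (hF : AEStronglyMeasurable F μ) (hF01 : ∀ᵐ x ∂μ, F x ∈ Icc 0 1)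
    (n : ℕ) : Integrable (fun x => 1 - F x ^ n) μ :=
  .of_bound (aestronglyMeasurable_const.sub (hF.pow n)) 1 <| hF01.mono fun _ hx =>
    abs_one_sub_pow_le_one hx.1 hx.2 n

lemma tendsto_integral_one_sub_pow (hF : AEStronglyMeasurable F μ)
    (hF01 : ∀ᵐ x ∂μ, F x ∈ Ico 0 1) :
    Tendsto (fun n : ℕ => ∫ x, 1 - F x ^ n ∂μ) atTop (𝓝 (μ.real univ)) := by
  have hF01' : ∀ᵐ x ∂μ, F x ∈ Icc 0 1 := hF01.mono fun _ h => Ico_subset_Icc_self h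
  simpa using tendsto_integral_of_dominated_convergence (fun _ => 1)
    (fun n => (integrable_one_sub_pow hF hF01' n).aestronglyMeasurable) (integrable_const 1)
    (fun n => hF01'.mono fun _ hx => abs_one_sub_pow_le_one hx.1 hx.2 n)
    (hF01.mono fun _ hx => (tendsto_pow_atTop_nhds_zero_of_lt_one hx.1 hx.2).const_sub 1)

lemma tendsto_natCast_succ_mul_integral_one_sub_pow_sub (hF : AEStronglyMeasurable F μ)
    (hF01 : ∀ᵐ x ∂μ, F x ∈ Ico 0 1) :
    Tendsto (fun n : ℕ => (n + 1) * ((∫ x, 1 - F x ^ (n + 1) ∂μ) - ∫ x, 1 - F x ^ n ∂μ))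
      atTop (𝓝 0) := by
  have hF01' : ∀ᵐ x ∂μ, F x ∈ Icc 0 1 := hF01.mono fun _ h => Ico_subset_Icc_self h
  have hdiff (n : ℕ) : (n + 1) * ((∫ x, 1 - F x ^ (n + 1) ∂μ) - ∫ x, 1 - F x ^ n ∂μ) =
      ∫ x, (n + 1) * F x ^ n * (1 - F x) ∂μ := by
    rw [← integral_sub (integrable_one_sub_pow hF hF01' _) (integrable_one_sub_pow hF hF01' _),
      ← integral_const_mul]
    congr 1 with x
    ring
  simp_rw [hdiff]
  simpa using tendsto_integral_of_dominated_convergence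
    (F := fun n x => (n + 1 : ℝ) * F x ^ n * (1 - F x)) (fun _ => 1)
    (fun n => (aestronglyMeasurable_const.mul (hF.pow n)).mul (aestronglyMeasurable_const.sub hF))
    (integrable_const 1)
    (fun n => hF01'.mono fun _ hx => by
      have hnonneg : 0 ≤ (n + 1 : ℝ) * F _ ^ n * (1 - F _) :=
        mul_nonneg (mul_nonneg (by positivity) (pow_nonneg hx.1 n)) (sub_nonneg.2 hx.2)
      rw [Real.norm_eq_abs, abs_of_nonneg hnonneg]
      exact natCast_succ_mul_pow_mul_one_sub_le_one hx.1 hx.2 n)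
    (hF01.mono fun _ hx => tendsto_natCast_succ_mul_pow_mul_one_sub hx.1 hx.2)

end IntegralsOfPowers

/-- The competition factor `γ(F,n)`, written in terms of `g k = E[Mₖ]`. -/
noncomputable def competitionFactor (g : ℕ → ℝ) (n : ℕ) : ℝ :=
  n * (g (n - 1) / g n - ((n : ℝ) - 1) / n)

lemma tendsto_competitionFactor {g : ℕ → ℝ} {L : ℝ} (hL : L ≠ 0) (hg : Tendsto g atTop (𝓝 L))
    (hdiff : Tendsto (fun n : ℕ => (n + 1 : ℝ) * (g (n + 1) - g n)) atTop (𝓝 0)) :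
    Tendsto (competitionFactor g) atTop (𝓝 1) := by
  rw [← tendsto_add_atTop_iff_nat 1]
  have hg' := (tendsto_add_atTop_iff_nat 1).2 hg
  have hlim := tendsto_const_nhds (x := (1 : ℝ)) |>.sub (hdiff.div hg' hL)
  rw [zero_div, sub_zero] at hlim
  refine hlim.congr' ?_
  filter_upwards [hg'.eventually_ne hL] with n hn
  simp only [competitionFactor, Pi.div_apply, Nat.add_sub_cancel]
  push_cast
  field_simp
  ring

section MaximumOfIID

variable {Ω : Type*} [MeasurableSpace Ω] {μ : Measure Ω} {v : ℕ → Ω → ℝ}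

lemma measurable_fold_max {ι : Type*} [DecidableEq ι] {f : ι → Ω → ℝ}
    (hf : ∀ i, Measurable (f i)) (b : ℝ) (s : Finset ι) :
    Measurable fun ω => s.fold max b (f · ω) := by
  induction s using Finset.induction_on with
  | empty => exact measurable_const
  | insert i s hi ih => simpa only [Finset.fold_insert hi] using (hf i).max ih

lemma measureReal_fold_max_le (hindep : iIndepFun v μ)
    (hid : ∀ i, IdentDistrib (v i) (v 0) μ μ) {t : ℝ} (ht : 0 ≤ t) (k : ℕ) :
    μ.real {ω | (Finset.range k).fold max 0 (v · ω) ≤ t} = μ.real {ω | v 0 ω ≤ t} ^ k := by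
  have hset : {ω | (Finset.range k).fold max 0 (v · ω) ≤ t} =
      ⋂ i ∈ Finset.range k, v i ⁻¹' Iic t := by
    ext ω
    simp [Finset.fold_max_le, ht]
  rw [measureReal_def, hset, hindep.meas_biInter fun i _ => ⟨Iic t, measurableSet_Iic, rfl⟩,
    Finset.prod_congr rfl fun i _ => (hid i).measure_mem_eq measurableSet_Iic]
  rw [Finset.prod_const, Finset.card_range, ENNReal.toReal_pow]
  rfl

lemma integral_fold_max_eq [IsProbabilityMeasure μ] (hmeas : ∀ i, Measurable (v i))
    (hindep : iIndepFun v μ) (hid : ∀ i, IdentDistrib (v i) (v 0) μ μ) {c : ℝ}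
    (hle : ∀ i ω, v i ω ≤ c) (k : ℕ) :
    ∫ ω, (Finset.range k).fold max 0 (v · ω) ∂μ =
      ∫ t in Ioo 0 c, 1 - μ.real {ω | v 0 ω ≤ t} ^ k := by
  set M : Ω → ℝ := fun ω => (Finset.range k).fold max 0 (v · ω)
  have hM_meas : Measurable M := measurable_fold_max hmeas 0 _
  have hM_nonneg (ω : Ω) : 0 ≤ M ω := (Finset.le_fold_max _).2 (Or.inl le_rfl)
  have hM_le (ω : Ω) : M ω ≤ max 0 c :=
    (Finset.fold_max_le _).2 ⟨le_max_left _ _, fun i _ => (hle i ω).trans (le_max_right _ _)⟩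
  have hM_int : Integrable M μ := .of_bound hM_meas.aestronglyMeasurable (max 0 c) <|
    ae_of_all _ fun ω => (abs_of_nonneg (hM_nonneg ω)).trans_le (hM_le ω)
  rw [hM_int.integral_eq_integral_meas_lt (ae_of_all _ hM_nonneg),
    setIntegral_eq_of_subset_of_ae_sdiff_eq_zero nullMeasurableSet_Ioi Ioo_subset_Ioi_self ?_]
  · refine setIntegral_congr_fun measurableSet_Ioo fun t ht => ?_
    rw [← measureReal_fold_max_le hindep hid ht.1.le k,
      ← probReal_compl_eq_one_sub (measurableSet_le hM_meas measurable_const)]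
    simp_rw [compl_ofPred, not_le]
  · refine ae_of_all _ fun t ⟨ht0, htc⟩ => ?_
    have hct : max 0 c ≤ t := max_le (le_of_lt ht0) (not_lt.1 fun h => htc ⟨ht0, h⟩)
    simp [fun ω => not_lt.2 ((hM_le ω).trans hct)]

end MaximumOfIID

/-- **Convergence of the competition factor:** if the common distribution of
the i.i.d. nonnegative values is supported on a compact interval `[0, c]` with
`c > 0` and `F(x) < 1` for every `x < c`, then
`γ(F,n) = n·(E[Mₙ₋₁]/E[Mₙ] − (n−1)/n) → 1` as `n → ∞`, where `M k` denotes the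
maximum of the first `k` draws. -/
theorem competition_factor_tendsto_one
    {Ω : Type*} [MeasureSpace Ω] [IsProbabilityMeasure (ℙ : Measure Ω)]
    (v : ℕ → Ω → ℝ)
    (hmeas : ∀ i, Measurable (v i))
    (hindep : iIndepFun v ℙ)
    (hid : ∀ i j, IdentDistrib (v i) (v j) ℙ ℙ)
    (c : ℝ) (hc : 0 < c)
    (hrange : ∀ i ω, v i ω ∈ Icc 0 c)
    (hcdf : ∀ x, x < c → ℙ {ω | v 0 ω ≤ x} < 1)
    (M : ℕ → Ω → ℝ)
    (hM : ∀ k ω, M k ω = (Finset.range k).fold max 0 (fun i => v i ω)) :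
    Tendsto
      (fun n : ℕ =>
        (n : ℝ) * ((∫ ω, M (n - 1) ω ∂ℙ) / (∫ ω, M n ω ∂ℙ) - ((n : ℝ) - 1) / n))
      atTop (nhds 1) := by
  obtain rfl : M = fun k ω => (Finset.range k).fold max 0 (v · ω) := funext₂ hM
  set F : ℝ → ℝ := fun t => (ℙ : Measure Ω).real {ω | v 0 ω ≤ t}
  have hFmeas : Measurable F := Monotone.measurable fun s t hst =>
    measureReal_mono fun ω (h : v 0 ω ≤ s) => h.trans hst
  have hF : ∀ᵐ t ∂volume.restrict (Ioo 0 c), F t ∈ Ico 0 1 := by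
    filter_upwards [ae_restrict_mem measurableSet_Ioo] with t ht
    exact ⟨measureReal_nonneg,
      (ENNReal.toReal_strict_mono ENNReal.one_ne_top (hcdf t ht.2)).trans_eq ENNReal.toReal_one⟩
  have hE : ∀ k, ∫ ω, (Finset.range k).fold max 0 (v · ω) = ∫ t in Ioo 0 c, 1 - F t ^ k :=
    integral_fold_max_eq hmeas hindep (fun i => hid i 0) (fun i ω => (hrange i ω).2)
  refine tendsto_competitionFactor
    (g := fun k => ∫ ω, (Finset.range k).fold max 0 (v · ω)) hc.ne' ?_ ?_
  · simpa [hE, Real.volume_real_Ioo_of_le hc.le] using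
      tendsto_integral_one_sub_pow hFmeas.aestronglyMeasurable hF
  · simpa [hE] using
      tendsto_natCast_succ_mul_integral_one_sub_pow_sub hFmeas.aestronglyMeasurable hF
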